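/- arXiv:1810.04754 — 3 statements merged into one kernel-verified Lean document; each statement's English description precedes it below -/
import Mathlib

section
/- Let G be a real p×q matrix. Then the minimum of zᵀ G v over all z ∈ {0,1}^p (vectors whose coordinates are each 0 or 1) and all unit vectors v ∈ ℝ^q equals −√( max over z ∈ {0,1}^p of zᵀ G Gᵀ z ). In particular, the joint minimization over binary codes z and unit feature vectors v reduces to the Boolean quadratic maximization max_{z∈{0,1}^p} zᵀ (G Gᵀ) z. -/
/-!
Writing `w = Gᵀ z`, the objective is `zᵀ G v = ⟪w, v⟫`. For fixed `z`, Cauchy–Schwarz bounds it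
below by `-‖w‖` over unit vectors `v`, with equality at `v = -w / ‖w‖` (any unit vector if
`w = 0`). Since `‖Gᵀ z‖² = zᵀ G Gᵀ z`, minimising `-‖Gᵀ z‖` over binary `z` gives
`-√(max_z zᵀ G Gᵀ z)`.
-/

open Matrix

section UnitVector

variable {ι : Type*} [Fintype ι]

lemma neg_sqrt_sum_sq_le_dotProduct (w v : ι → ℝ) (hv : √(∑ j, v j ^ 2) = 1) :
    -√(∑ j, w j ^ 2) ≤ w ⬝ᵥ v := by
  have h := Real.sum_mul_le_sqrt_mul_sqrt Finset.univ (-w) v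
  simp only [Pi.neg_apply, neg_mul, Finset.sum_neg_distrib, neg_sq, hv, mul_one] at h
  rw [dotProduct]
  linarith

lemma exists_sqrt_sum_sq_eq_one_dotProduct_eq [Nonempty ι] (w : ι → ℝ) :
    ∃ v : ι → ℝ, √(∑ j, v j ^ 2) = 1 ∧ w ⬝ᵥ v = -√(∑ j, w j ^ 2) := by
  classical
  by_cases hw : w = 0
  · obtain ⟨i⟩ := ‹Nonempty ι›
    refine ⟨Pi.single i 1, ?_, by simp [hw]⟩
    simp [Pi.single_apply, ite_pow]
  · set s := ∑ j, w j ^ 2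
    have hs : 0 < s := by
      obtain ⟨i, hi⟩ := Function.ne_iff.mp hw
      exact Finset.sum_pos' (fun j _ => sq_nonneg _) ⟨i, Finset.mem_univ _, sq_pos_iff.mpr hi⟩
    refine ⟨fun j => -w j / √s, ?_, ?_⟩
    · rw [Real.sqrt_eq_one]
      simp only [div_pow, neg_sq, Real.sq_sqrt hs.le, ← Finset.sum_div]
      exact div_self hs.ne'
    · calc w ⬝ᵥ (fun j => -w j / √s) = -(s / √s) := by
            rw [dotProduct, ← neg_div]
            simp only [s, ← Finset.sum_neg_distrib, Finset.sum_div]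
            exact Finset.sum_congr rfl fun j _ => by ring
        _ = -√s := by rw [Real.div_sqrt]

end UnitVector

lemma dotProduct_mul_transpose_mulVec_self {m n R : Type*} [Fintype m] [Fintype n]
    [CommSemiring R] (G : Matrix m n R) (z : m → R) :
    z ⬝ᵥ (G * Gᵀ) *ᵥ z = ∑ j, (Gᵀ *ᵥ z) j ^ 2 := by
  rw [← mulVec_mulVec, dotProduct_mulVec, mulVec_transpose, dotProduct]
  simp only [sq]

/-- The minimum of `zᵀ G v` over binary vectors `z ∈ {0,1}^p` and unit vectors `v ∈ ℝ^q`
equals `-√( max_{z ∈ {0,1}^p} zᵀ G Gᵀ z )`. -/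
theorem stmt_1 (p q : ℕ) (hq : 0 < q) (G : Matrix (Fin p) (Fin q) ℝ) (m : ℝ)
    (hm : IsGreatest {r : ℝ | ∃ z : Fin p → ℝ, (∀ i, z i = 0 ∨ z i = 1) ∧
        r = z ⬝ᵥ (G * Gᵀ).mulVec z} m) :
    IsLeast {r : ℝ | ∃ (z : Fin p → ℝ) (v : Fin q → ℝ),
        (∀ i, z i = 0 ∨ z i = 1) ∧ Real.sqrt (∑ j, v j ^ 2) = 1 ∧
        r = z ⬝ᵥ G.mulVec v} (-Real.sqrt m) := by
  obtain ⟨⟨z₀, hz₀, rfl⟩, hmax⟩ := hm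
  have hobj : ∀ z v, z ⬝ᵥ G *ᵥ v = Gᵀ *ᵥ z ⬝ᵥ v := fun z v => by
    rw [dotProduct_mulVec, mulVec_transpose]
  rw [dotProduct_mul_transpose_mulVec_self]
  refine ⟨?_, ?_⟩
  · have : Nonempty (Fin q) := Fin.pos_iff_nonempty.mp hq
    obtain ⟨v, hv, hwv⟩ := exists_sqrt_sum_sq_eq_one_dotProduct_eq (Gᵀ *ᵥ z₀)
    exact ⟨z₀, v, hz₀, hv, by rw [hobj, hwv]⟩
  · rintro _ ⟨z, v, hz, hv, rfl⟩
    have hz_le : ∑ j, (Gᵀ *ᵥ z) j ^ 2 ≤ ∑ j, (Gᵀ *ᵥ z₀) j ^ 2 := by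
      simpa only [dotProduct_mul_transpose_mulVec_self] using hmax ⟨z, hz, rfl⟩
    calc -√(∑ j, (Gᵀ *ᵥ z₀) j ^ 2) ≤ -√(∑ j, (Gᵀ *ᵥ z) j ^ 2) :=
          neg_le_neg (Real.sqrt_le_sqrt hz_le)
      _ ≤ z ⬝ᵥ G *ᵥ v := hobj z v ▸ neg_sqrt_sum_sq_le_dotProduct _ v hv
end

section
/- Let G be a real p×q matrix and let ρ ∈ [0,1]. If a binary vector z̃ ∈ {0,1}^p satisfies z̃ᵀ G Gᵀ z̃ ≥ ρ · max_{z ∈ {0,1}^p} zᵀ G Gᵀ z (i.e., z̃ is a ρ-approximate solution of the Boolean quadratic maximization), then the atom built from z̃ with its optimal unit feature vector satisfies the multiplicative greedy guarantee: min_{‖v‖₂=1} z̃ᵀ G v ≤ √ρ · ( min over z ∈ {0,1}^p and unit vectors v ∈ ℝ^q of zᵀ G v ). -/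
open Matrix

lemma quad_eq (p q : ℕ) (G : Matrix (Fin p) (Fin q) ℝ) (z : Fin p → ℝ) :
    z ⬝ᵥ (G * Gᵀ).mulVec z = ∑ j, (Gᵀ.mulVec z) j ^ 2 := by
  rw [← Matrix.mulVec_mulVec, Matrix.dotProduct_mulVec, ← Matrix.mulVec_transpose]
  simp [dotProduct, sq]

lemma dot_eq (p q : ℕ) (G : Matrix (Fin p) (Fin q) ℝ) (z : Fin p → ℝ) (v : Fin q → ℝ) :
    z ⬝ᵥ G.mulVec v = (Gᵀ.mulVec z) ⬝ᵥ v := by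
  rw [Matrix.dotProduct_mulVec, ← Matrix.mulVec_transpose]

/-- If a binary vector `z̃` is a `ρ`-approximate maximizer of `z ↦ zᵀ G Gᵀ z` over
`{0,1}^p`, then the value of the greedy atom built from `z̃` (minimizing over unit
feature vectors `v`) satisfies the multiplicative guarantee
`min_{‖v‖=1} z̃ᵀ G v ≤ √ρ · min_{z ∈ {0,1}^p, ‖v‖=1} zᵀ G v`. -/
theorem stmt_2 (p q : ℕ) (G : Matrix (Fin p) (Fin q) ℝ)
    (ρ : ℝ) (hρ : ρ ∈ Set.Icc (0 : ℝ) 1)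
    (zt : Fin p → ℝ) (hzt : ∀ i, zt i = 0 ∨ zt i = 1)
    (m : ℝ)
    (hm : IsGreatest {r : ℝ | ∃ z : Fin p → ℝ, (∀ i, z i = 0 ∨ z i = 1) ∧
        r = z ⬝ᵥ (G * Gᵀ).mulVec z} m)
    (happrox : zt ⬝ᵥ (G * Gᵀ).mulVec zt ≥ ρ * m)
    (a : ℝ)
    (ha : IsLeast {r : ℝ | ∃ v : Fin q → ℝ,
        Real.sqrt (∑ j, v j ^ 2) = 1 ∧ r = zt ⬝ᵥ G.mulVec v} a)
    (b : ℝ)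
    (hb : IsLeast {r : ℝ | ∃ (z : Fin p → ℝ) (v : Fin q → ℝ),
        (∀ i, z i = 0 ∨ z i = 1) ∧ Real.sqrt (∑ j, v j ^ 2) = 1 ∧
        r = z ⬝ᵥ G.mulVec v} b) :
    a ≤ Real.sqrt ρ * b := by
  obtain ⟨hρ0, hρ1⟩ := hρ
  set w : Fin q → ℝ := Gᵀ.mulVec zt with hw
  set S : ℝ := ∑ j, w j ^ 2 with hS
  have hS0 : 0 ≤ S := Finset.sum_nonneg fun j _ => sq_nonneg _
  have hquad : zt ⬝ᵥ (G * Gᵀ).mulVec zt = S := quad_eq p q G zt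
  have hm0 : 0 ≤ m := by
    have h0 : (0:ℝ) ∈ {r : ℝ | ∃ z : Fin p → ℝ, (∀ i, z i = 0 ∨ z i = 1) ∧
        r = z ⬝ᵥ (G * Gᵀ).mulVec z} := ⟨0, fun i => Or.inl rfl, by simp⟩
    exact hm.2 h0
  -- b ≥ -√m
  have hbm : -Real.sqrt m ≤ b := by
    obtain ⟨z, v, hz, hv, hbv⟩ := hb.1
    have hv1 : ∑ j, v j ^ 2 = 1 := by
      have := congrArg (· ^ 2) hv
      simpa [Real.sq_sqrt (Finset.sum_nonneg fun j _ => sq_nonneg (v j))] using this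
    have hzm : ∑ j, (Gᵀ.mulVec z) j ^ 2 ≤ m := by
      have : z ⬝ᵥ (G * Gᵀ).mulVec z ∈ {r : ℝ | ∃ z : Fin p → ℝ,
          (∀ i, z i = 0 ∨ z i = 1) ∧ r = z ⬝ᵥ (G * Gᵀ).mulVec z} := ⟨z, hz, rfl⟩
      have := hm.2 this
      rwa [quad_eq p q G z] at this
    have hcs : b ^ 2 ≤ m := by
      have := Finset.sum_mul_sq_le_sq_mul_sq Finset.univ (fun j => (Gᵀ.mulVec z) j) v
      rw [hv1, mul_one] at this
      calc b ^ 2 = (∑ j, (Gᵀ.mulVec z) j * v j) ^ 2 := by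
            rw [hbv, dot_eq]; rfl
        _ ≤ ∑ j, (Gᵀ.mulVec z) j ^ 2 := this
        _ ≤ m := hzm
    have habs : |b| ≤ Real.sqrt m := by
      rw [← Real.sqrt_sq_eq_abs]
      exact Real.sqrt_le_sqrt hcs
    linarith [neg_abs_le b]
  -- a ≤ -√S
  have haS : a ≤ -Real.sqrt S := by
    by_cases hwz : w = 0
    · obtain ⟨v, hv, hav⟩ := ha.1
      have : a = 0 := by rw [hav, dot_eq, ← hw, hwz]; simp
      rw [this, hS, hwz]
      simp
    · have hSpos : 0 < S := by
        rcases Function.ne_iff.mp hwz with ⟨j, hj⟩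
        exact Finset.sum_pos' (fun i _ => sq_nonneg _)
          ⟨j, Finset.mem_univ j, by exact pow_pos (abs_pos.mpr hj) 2 |>.trans_le (by rw [sq_abs])⟩
      set c : ℝ := Real.sqrt S with hc
      have hcpos : 0 < c := Real.sqrt_pos.mpr hSpos
      set v : Fin q → ℝ := fun j => -(w j) / c with hv
      have hvnorm : Real.sqrt (∑ j, v j ^ 2) = 1 := by
        have : ∑ j, v j ^ 2 = S / c ^ 2 := by
          rw [hS, Finset.sum_div]
          apply Finset.sum_congr rfl
          intro j _
          rw [hv]
          field_simp
        rw [this, Real.sq_sqrt hS0]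
        · rw [div_self hSpos.ne']
          exact Real.sqrt_one
      have hval : zt ⬝ᵥ G.mulVec v = -c := by
        rw [dot_eq, ← hw]
        have : w ⬝ᵥ v = -(S / c) := by
          simp only [dotProduct, hv, hS]
          calc ∑ x, w x * (-w x / c) = (∑ x, -(w x ^ 2)) / c := by
                rw [Finset.sum_div]
                exact Finset.sum_congr rfl (fun x _ => by ring)
            _ = -((∑ x, w x ^ 2) / c) := by rw [Finset.sum_neg_distrib, neg_div]
        rw [this, hc]
        rw [Real.div_sqrt]
      have : -c ∈ {r : ℝ | ∃ v : Fin q → ℝ,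
          Real.sqrt (∑ j, v j ^ 2) = 1 ∧ r = zt ⬝ᵥ G.mulVec v} := ⟨v, hvnorm, hval.symm⟩
      exact ha.2 this
  -- conclude
  have hρm : Real.sqrt ρ * Real.sqrt m ≤ Real.sqrt S := by
    rw [← Real.sqrt_mul hρ0]
    exact Real.sqrt_le_sqrt (by linarith [happrox, hquad])
  have h1 : Real.sqrt ρ * (-Real.sqrt m) ≤ Real.sqrt ρ * b :=
    mul_le_mul_of_nonneg_left hbm (Real.sqrt_nonneg ρ)
  nlinarith [Real.sqrt_nonneg ρ]
end

section
/- (Theorem 1, convergence of Binary Matching Pursuit.) Let E be a finite-dimensional real inner product space, fix X ∈ E, and define F(W) = (1/2)‖X − W‖², so ∇F(W) = W − X. Let 𝔸 ⊆ E be a nonempty compact set of atoms that is symmetric (M ∈ 𝔸 implies −M ∈ 𝔸). For W in the linear span of 𝔸 define the atomic norm ‖W‖_𝔸 = inf{ Σ_M |c_M| : W = Σ_M c_M M, a finite linear combination of atoms M ∈ 𝔸 }. Let μ ∈ (0,1] and β > 0, and assume F is β-smooth with respect to the atomic norm: ‖Δ‖ ≤ √β · ‖Δ‖_𝔸 for all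 Δ in the span of 𝔸 (equivalently F(W+Δ) − F(W) ≤ ⟨∇F(W), Δ⟩ + (β/2)‖Δ‖_𝔸²). Consider iterates defined by: W^0 = 0, A^0 = ∅, and for each k ≥ 1 an atom M^k ∈ 𝔸 satisfying the μ-approximate greedy condition ⟨∇F(W^{k−1}), M^k⟩ ≤ μ · min_{M ∈ 𝔸} ⟨∇F(W^{k−1}), M⟩, with A^k = A^{k−1} ∪ {M^k}, and W^k a minimizer of F over the linear span of A^k (fully-corrective step). Then for every W* in the span of 𝔸 and every k ≥ 1, F(W^k) − F(W*) ≤ (2β‖W*‖_𝔸²/μ²) · (1/k). -/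
/-!
Write `f W = ½‖X - W‖²`, `g = W k - X` and `a k = f (W k) - f W*`. Since `W k` minimizes `f`
over a subspace containing it, `g ⟂ W k`, and convexity gives `⟪g, W*⟫ ≤ -a k`. For a symmetric
atom set, `(min_{M ∈ 𝔸} ⟪g, M⟫) · ‖W*‖_𝔸 ≤ ⟪g, W*⟫` (test `g` against any atomic representation
of `W*`), so the greedy atom satisfies `⟪g, Mᵏ⟫ ≤ -μ a k / ‖W*‖_𝔸`. Smoothness bounds every atom
by `√β`, hence the step of length `μ a k / (β ‖W*‖_𝔸)` along `Mᵏ`, which the fully-corrective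
update can take, yields `a (k+1) ≤ a k - a k ² / C` with `C = 2β‖W*‖_𝔸²/μ²`, and this
recursion forces `k · a k ≤ C`.
-/

open scoped RealInnerProductSpace

/-- The atomic norm of `W` w.r.t. an atom set `A`: the infimum of `ℓ1` norms of
coefficient vectors over all finite representations of `W` as linear combinations of
atoms in `A`. -/
noncomputable def atomicNorm {E : Type*} [NormedAddCommGroup E] [InnerProductSpace ℝ E]
    (A : Set E) (W : E) : ℝ :=
  sInf {s : ℝ | ∃ (n : ℕ) (c : Fin n → ℝ) (M : Fin n → E),
    (∀ i, M i ∈ A) ∧ W = ∑ i, c i • M i ∧ s = ∑ i, |c i|}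

section AtomicNorm

variable {E : Type*} [NormedAddCommGroup E] [InnerProductSpace ℝ E] {A : Set E}

theorem atomicNorm_nonneg (W : E) : 0 ≤ atomicNorm A W :=
  Real.sInf_nonneg (by rintro _ ⟨n, c, M, -, -, rfl⟩; positivity)

theorem atomicNorm_sum_smul_le {n : ℕ} (c : Fin n → ℝ) {M : Fin n → E} (hM : ∀ i, M i ∈ A) :
    atomicNorm A (∑ i, c i • M i) ≤ ∑ i, |c i| :=
  csInf_le ⟨0, by rintro _ ⟨n, c, M, -, -, rfl⟩; positivity⟩ ⟨n, c, M, hM, rfl, rfl⟩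

theorem le_atomicNorm {W : E} (hW : W ∈ Submodule.span ℝ A) {t : ℝ}
    (h : ∀ (n : ℕ) (c : Fin n → ℝ) (M : Fin n → E),
      (∀ i, M i ∈ A) → W = ∑ i, c i • M i → t ≤ ∑ i, |c i|) :
    t ≤ atomicNorm A W := by
  obtain ⟨n, c, M, hsum⟩ := Submodule.mem_span_set'.1 hW
  exact le_csInf ⟨_, n, c, fun i => M i, fun i => (M i).2, hsum.symm, rfl⟩
    fun _ ⟨n, c, M, hM, hW, hs⟩ => hs ▸ h n c M hM hW

theorem atomicNorm_le_one_of_mem {M : E} (hM : M ∈ A) : atomicNorm A M ≤ 1 := by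
  simpa using atomicNorm_sum_smul_le (fun _ : Fin 1 => 1) fun _ => hM

theorem mul_sum_abs_le_inner (hAs : ∀ M ∈ A, -M ∈ A) {g : E} {m : ℝ}
    (hm : ∀ M ∈ A, m ≤ ⟪g, M⟫) {n : ℕ} (c : Fin n → ℝ) {M : Fin n → E} (hM : ∀ i, M i ∈ A) :
    m * ∑ i, |c i| ≤ ⟪g, ∑ i, c i • M i⟫ := by
  rw [Finset.mul_sum, inner_sum]
  refine Finset.sum_le_sum fun i _ => ?_
  rw [real_inner_smul_right]
  rcases le_or_gt 0 (c i) with hc | hc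
  · rw [abs_of_nonneg hc, mul_comm m]
    exact mul_le_mul_of_nonneg_left (hm _ (hM i)) hc
  · have hneg := hm _ (hAs _ (hM i))
    rw [inner_neg_right] at hneg
    rw [abs_of_neg hc]
    nlinarith

theorem mul_atomicNorm_le_inner (hAs : ∀ M ∈ A, -M ∈ A) {g W : E}
    (hW : W ∈ Submodule.span ℝ A) {m : ℝ} (hm : ∀ M ∈ A, m ≤ ⟪g, M⟫) :
    m * atomicNorm A W ≤ ⟪g, W⟫ := by
  rcases le_or_gt 0 m with hm0 | hm0
  · obtain ⟨n, c, M, rfl⟩ := Submodule.mem_span_set'.1 hW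
    exact (mul_le_mul_of_nonneg_left (atomicNorm_sum_smul_le c fun i => (M i).2) hm0).trans
      (mul_sum_abs_le_inner hAs hm c fun i => (M i).2)
  · rw [mul_comm, ← div_le_iff_of_neg hm0]
    refine le_atomicNorm hW fun n c M hM hW => ?_
    rw [div_le_iff_of_neg hm0, mul_comm, hW]
    exact mul_sum_abs_le_inner hAs hm c hM

theorem bddBelow_image_inner {r : ℝ} (hA : ∀ M ∈ A, ‖M‖ ≤ r) (g : E) :
    BddBelow ((fun M => ⟪g, M⟫) '' A) := by
  refine ⟨-(‖g‖ * r), ?_⟩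
  rintro _ ⟨M, hM, rfl⟩
  exact neg_le_of_abs_le ((abs_real_inner_le_norm g M).trans
    (mul_le_mul_of_nonneg_left (hA M hM) (norm_nonneg g)))

theorem norm_le_sqrt_of_mem {β : ℝ}
    (hsmooth : ∀ Δ ∈ Submodule.span ℝ A, ‖Δ‖ ≤ √β * atomicNorm A Δ) {M : E} (hM : M ∈ A) :
    ‖M‖ ≤ √β :=
  (hsmooth M (Submodule.subset_span hM)).trans
    (mul_le_of_le_one_right (Real.sqrt_nonneg β) (atomicNorm_le_one_of_mem hM))

theorem mul_atomicNorm_le_of_greedy (hAs : ∀ M ∈ A, -M ∈ A) {g : E}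
    (hbdd : BddBelow ((fun M => ⟪g, M⟫) '' A)) {μ : ℝ} (hμ : 0 ≤ μ) {M W : E}
    (hM : ⟪g, M⟫ ≤ μ * sInf ((fun M => ⟪g, M⟫) '' A)) (hW : W ∈ Submodule.span ℝ A) :
    ⟪g, M⟫ * atomicNorm A W ≤ μ * ⟪g, W⟫ :=
  calc ⟪g, M⟫ * atomicNorm A W
      ≤ μ * (sInf ((fun M => ⟪g, M⟫) '' A) * atomicNorm A W) := by
        rw [← mul_assoc]; exact mul_le_mul_of_nonneg_right hM (atomicNorm_nonneg W)
    _ ≤ μ * ⟪g, W⟫ := mul_le_mul_of_nonneg_left (mul_atomicNorm_le_inner hAs hW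
        fun _ hM' => csInf_le hbdd (Set.mem_image_of_mem _ hM')) hμ

end AtomicNorm

section SqLoss

variable {E : Type*} [NormedAddCommGroup E] [InnerProductSpace ℝ E]

noncomputable def sqLoss (X W : E) : ℝ := 1 / 2 * ‖X - W‖ ^ 2

theorem sqLoss_add (X W Δ : E) :
    sqLoss X (W + Δ) = sqLoss X W + ⟪W - X, Δ⟫ + 1 / 2 * ‖Δ‖ ^ 2 := by
  rw [sqLoss, sqLoss, show X - (W + Δ) = (X - W) - Δ by abel, norm_sub_sq_real,
    ← neg_sub X W, inner_neg_left]
  ring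

theorem sqLoss_sub_le_inner (X W V : E) : sqLoss X W - sqLoss X V ≤ ⟪W - X, W - V⟫ := by
  have h := sqLoss_add X W (V - W)
  rw [add_sub_cancel] at h
  rw [h, ← neg_sub W V, inner_neg_right]
  nlinarith [sq_nonneg ‖V - W‖]

theorem sqLoss_add_smul_le {X W M : E} {β δ : ℝ} (hβ : 0 < β) (hM : ‖M‖ ≤ √β) (hδ : 0 ≤ δ)
    (hg : ⟪W - X, M⟫ ≤ -δ) : sqLoss X (W + (δ / β) • M) ≤ sqLoss X W - δ ^ 2 / (2 * β) := by
  have hM2 : ‖M‖ ^ 2 ≤ β := by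
    simpa [Real.sq_sqrt hβ.le] using pow_le_pow_left₀ (norm_nonneg M) hM 2
  rw [sqLoss_add, real_inner_smul_right, norm_smul, mul_pow, Real.norm_eq_abs, sq_abs]
  have h1 : δ / β * ⟪W - X, M⟫ ≤ δ / β * -δ := mul_le_mul_of_nonneg_left hg (by positivity)
  have h2 : (δ / β) ^ 2 * ‖M‖ ^ 2 ≤ (δ / β) ^ 2 * β := mul_le_mul_of_nonneg_left hM2 (by positivity)
  have h3 : δ / β * -δ + 1 / 2 * ((δ / β) ^ 2 * β) = -(δ ^ 2 / (2 * β)) := by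
    field_simp; ring
  linarith

theorem inner_sub_eq_zero_of_isMinOn {K : Submodule ℝ E} {X W : E} (hW : W ∈ K)
    (hmin : IsMinOn (sqLoss X) K W) : ∀ V ∈ K, ⟪W - X, V⟫ = 0 := by
  have hnorm : ∀ V ∈ K, ‖X - W‖ ≤ ‖X - V‖ := fun V hV => by
    have := isMinOn_iff.1 hmin V hV
    unfold sqLoss at this
    exact (pow_le_pow_iff_left₀ (norm_nonneg _) (norm_nonneg _) two_ne_zero).1 (by linarith)
  have hbdd : BddBelow (Set.range fun V : (K : Set E) => ‖X - V‖) :=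
    ⟨0, Set.forall_mem_range.2 fun _ => norm_nonneg _⟩
  have hinf : ‖X - W‖ = ⨅ V : (K : Set E), ‖X - V‖ :=
    le_antisymm (le_ciInf fun V => hnorm V V.2) (ciInf_le hbdd ⟨W, hW⟩)
  intro V hV
  rw [← neg_sub X W, inner_neg_left, (K.norm_eq_iInf_iff_real_inner_eq_zero hW).1 hinf V hV,
    neg_zero]

theorem sqLoss_sub_le_of_greedy {A : Set E} (hAs : ∀ M ∈ A, -M ∈ A) {β μ : ℝ} (hβ : 0 < β)
    (hμ : 0 < μ) (hatom : ∀ M ∈ A, ‖M‖ ≤ √β) {K : Submodule ℝ E} {X V V' M Wstar : E}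
    (hV : V ∈ K) (hMK : M ∈ K) (hMA : M ∈ A) (horth : ⟪V - X, V⟫ = 0)
    (hgreedy : ⟪V - X, M⟫ ≤ μ * sInf ((fun M => ⟪V - X, M⟫) '' A))
    (hmin : IsMinOn (sqLoss X) K V') (hWstar : Wstar ∈ Submodule.span ℝ A)
    (hρ : 0 < atomicNorm A Wstar) (hgap : 0 ≤ sqLoss X V - sqLoss X Wstar) :
    sqLoss X V' - sqLoss X Wstar ≤ (sqLoss X V - sqLoss X Wstar) -
      (sqLoss X V - sqLoss X Wstar) ^ 2 / (2 * β * atomicNorm A Wstar ^ 2 / μ ^ 2) := by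
  set a := sqLoss X V - sqLoss X Wstar
  set ρ := atomicNorm A Wstar
  have hdual : ⟪V - X, M⟫ * ρ ≤ μ * ⟪V - X, Wstar⟫ :=
    mul_atomicNorm_le_of_greedy hAs (bddBelow_image_inner hatom _) hμ.le hgreedy hWstar
  have hconv : a ≤ -⟪V - X, Wstar⟫ := by
    have h := sqLoss_sub_le_inner X V Wstar
    rw [inner_sub_right, horth] at h
    linarith
  have hdescent : ⟪V - X, M⟫ ≤ -(μ * a / ρ) := by
    rw [neg_div', le_div_iff₀ hρ]
    linarith [mul_le_mul_of_nonneg_left hconv hμ.le]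
  have hV' : sqLoss X V' ≤ sqLoss X (V + (μ * a / ρ / β) • M) :=
    isMinOn_iff.1 hmin _ (add_mem hV (K.smul_mem _ hMK))
  have hrate : (μ * a / ρ) ^ 2 / (2 * β) = a ^ 2 / (2 * β * ρ ^ 2 / μ ^ 2) := by
    field_simp
  linarith [sqLoss_add_smul_le hβ (hatom M hMA) (by positivity) hdescent]

end SqLoss

theorem mul_le_of_sq_decrease {e : ℕ → ℝ} {C : ℝ} (hC : 0 < C) (hmono : ∀ j, e (j + 1) ≤ e j)
    (hdec : ∀ j, 0 < e j → e (j + 1) ≤ e j - e j ^ 2 / C) : ∀ j : ℕ, e j * j ≤ C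
  | 0 => by simpa using hC.le
  | j + 1 => by
    have ih := mul_le_of_sq_decrease hC hmono hdec j
    push_cast
    rcases le_or_gt (e j) 0 with h | h
    · exact (mul_nonpos_of_nonpos_of_nonneg ((hmono j).trans h) (by positivity)).trans hC.le
    · have hstep : (e j - e j ^ 2 / C) * (j + 1) ≤ C := by
        -- `C² - C x (j+1) + x² (j+1) = (C - x j - x)² + (C - x j) x (j+1)` with `x = e j`
        rw [sub_mul, div_mul_eq_mul_div, sub_le_iff_le_add, ← sub_le_iff_le_add',
          le_div_iff₀ hC]
        nlinarith [sq_nonneg (C - e j * j - e j),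
          mul_nonneg (mul_nonneg (sub_nonneg.2 ih) h.le) (by positivity : (0 : ℝ) ≤ j + 1)]
      nlinarith [hdec j h]

theorem iterate_mem_span {R E : Type*} [Semiring R] [AddCommMonoid E] [Module R E]
    {W Msel : ℕ → E} (hW0 : W 0 = 0)
    (hmem : ∀ k, W (k + 1) ∈ Submodule.span R (Msel '' Set.Iic k)) :
    ∀ j, W j ∈ Submodule.span R (Msel '' Set.Iic j)
  | 0 => hW0 ▸ zero_mem _
  | j + 1 => Submodule.span_mono (Set.image_mono (Set.Iic_subset_Iic.2 j.le_succ)) (hmem j)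

theorem stmt_9_general {E : Type*} [NormedAddCommGroup E] [InnerProductSpace ℝ E]
    (X : E) (F : E → ℝ) (hF : ∀ W, F W = (1 / 2) * ‖X - W‖ ^ 2)
    (A : Set E) (hAs : ∀ M ∈ A, -M ∈ A)
    (μ β : ℝ) (hμ : μ ∈ Set.Ioc (0 : ℝ) 1) (hβ : 0 < β)
    (hsmooth : ∀ Δ ∈ Submodule.span ℝ A, ‖Δ‖ ≤ Real.sqrt β * atomicNorm A Δ)
    (W : ℕ → E) (Msel : ℕ → E)
    (hW0 : W 0 = 0)
    (hMsel : ∀ k, Msel k ∈ A)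
    (hgreedy : ∀ k, ⟪W k - X, Msel k⟫ ≤ μ * sInf ((fun M => ⟪W k - X, M⟫) '' A))
    (hmem : ∀ k, W (k + 1) ∈ Submodule.span ℝ (Msel '' Set.Iic k))
    (hcorr : ∀ k, ∀ W' ∈ Submodule.span ℝ (Msel '' Set.Iic k), F (W (k + 1)) ≤ F W')
    (Wstar : E) (hWstar : Wstar ∈ Submodule.span ℝ A) :
    ∀ k : ℕ, 1 ≤ k →
      F (W k) - F Wstar ≤ (2 * β * atomicNorm A Wstar ^ 2 / μ ^ 2) * (1 / (k : ℝ)) := by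
  obtain ⟨hμ0, -⟩ := hμ
  obtain rfl : F = sqLoss X := funext hF
  have hatom : ∀ M ∈ A, ‖M‖ ≤ √β := fun M hM => norm_le_sqrt_of_mem hsmooth hM
  have hspan := iterate_mem_span hW0 hmem
  have horth : ∀ j, ⟪W j - X, W j⟫ = 0
    | 0 => by simp [hW0]
    | j + 1 => inner_sub_eq_zero_of_isMinOn (hmem j) (isMinOn_iff.2 (hcorr j)) _ (hmem j)
  intro k hk
  obtain ⟨j, rfl⟩ : ∃ j, k = j + 1 := ⟨k - 1, by omega⟩
  rcases (atomicNorm_nonneg Wstar).eq_or_lt with hρ | hρ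
  · -- `‖W*‖_𝔸 = 0` forces `W* = 0` by smoothness, and `0` is a competitor at every step
    have hWstar0 := hsmooth Wstar hWstar
    rw [← hρ, mul_zero, norm_le_zero_iff] at hWstar0
    rw [← hρ, hWstar0]
    simpa using hcorr j 0 (zero_mem _)
  · have hrate := mul_le_of_sq_decrease (e := fun j => sqLoss X (W j) - sqLoss X Wstar)
      (by positivity) (fun j => by simpa using hcorr j _ (hspan j))
      (fun j hj => sqLoss_sub_le_of_greedy hAs hβ hμ0 hatom (hspan j)
        (Submodule.subset_span ⟨j, Set.mem_Iic.2 le_rfl, rfl⟩) (hMsel j) (horth j) (hgreedy j)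
        (isMinOn_iff.2 (hcorr j)) hWstar hρ hj.le) (j + 1)
    rw [mul_one_div, le_div_iff₀ (by positivity)]
    exact hrate

/-- Theorem 1 (convergence of Binary Matching Pursuit): with `F(W) = (1/2)‖X − W‖²`,
a compact symmetric atom set `A`, `β`-smoothness w.r.t. the atomic norm, a
`μ`-approximate greedy atom selection and fully-corrective iterates starting from
`W⁰ = 0`, we have `F(Wᵏ) − F(W*) ≤ (2β‖W*‖_𝔸²/μ²)·(1/k)` for every `W*` in the span
of `A` and every `k ≥ 1`. -/
theorem stmt_9 {E : Type*} [NormedAddCommGroup E] [InnerProductSpace ℝ E]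
    [FiniteDimensional ℝ E]
    (X : E) (F : E → ℝ) (hF : ∀ W, F W = (1 / 2) * ‖X - W‖ ^ 2)
    (A : Set E) (hA : A.Nonempty) (hAc : IsCompact A) (hAs : ∀ M ∈ A, -M ∈ A)
    (μ β : ℝ) (hμ : μ ∈ Set.Ioc (0 : ℝ) 1) (hβ : 0 < β)
    (hsmooth : ∀ Δ ∈ Submodule.span ℝ A, ‖Δ‖ ≤ Real.sqrt β * atomicNorm A Δ)
    (W : ℕ → E) (Msel : ℕ → E)
    (hW0 : W 0 = 0)
    (hMsel : ∀ k, Msel k ∈ A)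
    (hgreedy : ∀ k, ⟪W k - X, Msel k⟫ ≤ μ * sInf ((fun M => ⟪W k - X, M⟫) '' A))
    (hmem : ∀ k, W (k + 1) ∈ Submodule.span ℝ (Msel '' Set.Iic k))
    (hcorr : ∀ k, ∀ W' ∈ Submodule.span ℝ (Msel '' Set.Iic k), F (W (k + 1)) ≤ F W')
    (Wstar : E) (hWstar : Wstar ∈ Submodule.span ℝ A) :
    ∀ k : ℕ, 1 ≤ k →
      F (W k) - F Wstar ≤ (2 * β * atomicNorm A Wstar ^ 2 / μ ^ 2) * (1 / (k : ℝ)) :=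
  stmt_9_general X F hF A hAs μ β hμ hβ hsmooth W Msel hW0 hMsel hgreedy hmem hcorr Wstar hWstar
end
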